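/- arXiv:1505.03573 — 6 statements merged into one kernel-verified Lean document; each statement's English description precedes it below -/
import Mathlib

section
/- Two quaternions α and β are conjugate (i.e., α = h⁻¹βh for some nonzero quaternion h) if and only if Re(α) = Re(β) and |α| = |β|. -/
/-!
Since `β + star β = 2 Re β` and `β * star β = |β|²` are central, every quaternion `α` with
`Re α = Re β` and `|α| = |β|` satisfies `α² - (β + star β) α + β star β = 0`; hence
`h = x α - star β x` intertwines, `h α = β h`, for every `x`. Some `x` makes `h ≠ 0` unless
`x α = star β x` for all `x`, which forces `α` to be central, i.e. real, and then `α = β`.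
-/

open Quaternion

namespace Quaternion

section CommRing

variable {R : Type*} [CommRing R]

theorem re_mul_comm (a b : ℍ[R]) : (a * b).re = (b * a).re := by
  simp only [re_mul]
  ring

theorem mul_sub_star_mul_intertwines {a b : ℍ[R]} (hre : a.re = b.re)
    (hn : normSq a = normSq b) (x : ℍ[R]) :
    (x * a - star b * x) * a = b * (x * a - star b * x) := by
  have hsum : b + star b = a + star a := by rw [self_add_star, self_add_star, hre]
  have hprod : b * star b = star a * a := by rw [self_mul_star, star_mul_self, hn]
  have hsum_comm : (a + star a) * x = x * (a + star a) := by
    rw [self_add_star', coe_commutes]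
  have hprod_comm : star a * a * x = x * (star a * a) := by
    rw [star_mul_self, coe_commutes]
  rw [← sub_eq_zero]
  calc (x * a - star b * x) * a - b * (x * a - star b * x)
      = x * a * a - (b + star b) * x * a + b * star b * x := by noncomm_ring
    _ = x * a * a - x * (a + star a) * a + x * (star a * a) := by
      rw [hsum, hprod, hsum_comm, hprod_comm]
    _ = 0 := by noncomm_ring

theorem eq_re_of_forall_mul_comm [NoZeroDivisors R] [CharZero R] {a : ℍ[R]}
    (h : ∀ x : ℍ[R], x * a = a * x) : a = a.re := by
  -- `i` and `j` stay folded until `imJ_mul`, `imK_mul` have fired: they do not match on literals.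
  set i : ℍ[R] := ⟨0, 1, 0, 0⟩ with hi
  set j : ℍ[R] := ⟨0, 0, 1, 0⟩ with hj
  obtain ⟨-, -, hK, hJ⟩ := Quaternion.ext_iff.mp (h i)
  obtain ⟨-, -, -, hI⟩ := Quaternion.ext_iff.mp (h j)
  simp only [imJ_mul, imK_mul] at hI hJ hK
  simp only [hi, hj, zero_mul, add_zero, one_mul, zero_sub, mul_zero, mul_one, zero_add, sub_zero,
    sub_self] at hI hJ hK
  ext
  · rfl
  · exact neg_eq_self.mp hI
  · exact self_eq_neg.mp hJ
  · exact neg_eq_self.mp hK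

end CommRing

variable {R : Type*} [Field R] [LinearOrder R] [IsStrictOrderedRing R]

theorem re_inv_mul_mul {h : ℍ[R]} (hh : h ≠ 0) (a : ℍ[R]) : (h⁻¹ * a * h).re = a.re := by
  rw [re_mul_comm, ← mul_assoc, mul_inv_cancel₀ hh, one_mul]

theorem exists_ne_zero_eq_inv_mul_mul_of_re_eq_of_normSq_eq {a b : ℍ[R]} (hre : a.re = b.re)
    (hn : normSq a = normSq b) : ∃ h : ℍ[R], h ≠ 0 ∧ a = h⁻¹ * b * h := by
  by_cases hcomm : ∀ x : ℍ[R], x * a = star b * x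
  · have hab : a = star b := by simpa using hcomm 1
    have hreal : star a = a :=
      star_eq_self.mpr (eq_re_of_forall_mul_comm fun x => hab ▸ hcomm x)
    refine ⟨1, one_ne_zero, ?_⟩
    rw [inv_one, one_mul, mul_one, ← star_star b, ← hab, hreal]
  · obtain ⟨x, hx⟩ := not_forall.mp hcomm
    have hne : x * a - star b * x ≠ 0 := sub_ne_zero.mpr hx
    refine ⟨_, hne, ?_⟩
    rw [mul_assoc, eq_inv_mul_iff_mul_eq₀ hne]
    exact mul_sub_star_mul_intertwines hre hn x

end Quaternion

theorem norm_inv_mul_mul {𝕜 : Type*} [NormedDivisionRing 𝕜] {h : 𝕜} (hh : h ≠ 0) (a : 𝕜) :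
    ‖h⁻¹ * a * h‖ = ‖a‖ := by
  rw [norm_mul, norm_mul, norm_inv]
  field_simp [norm_ne_zero_iff.mpr hh]

/-- Two quaternions are conjugate iff they have the same real part and the same norm. -/
theorem stmt0 (α β : Quaternion ℝ) :
    (∃ h : Quaternion ℝ, h ≠ 0 ∧ α = h⁻¹ * β * h) ↔ α.re = β.re ∧ ‖α‖ = ‖β‖ := by
  constructor
  · rintro ⟨h, hh, rfl⟩
    exact ⟨re_inv_mul_mul hh β, norm_inv_mul_mul hh β⟩
  · rintro ⟨hre, hnorm⟩
    refine exists_ne_zero_eq_inv_mul_mul_of_re_eq_of_normSq_eq hre ?_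
    rw [normSq_eq_norm_mul_self, normSq_eq_norm_mul_self, hnorm]
end

section
/- Let γ₁, …, γ_N be a spherical chain in a conjugacy class V (i.e., all γ_j are mutually conjugate and γ_{j+1} ≠ \bar{γ_j} for each j). Then the polynomial f = (z−γ₁)(z−γ₂)⋯(z−γ_N) has γ₁ as its unique left zero; more precisely, for every γ ∈ V with γ ≠ γ₁, f^{eℓ}(γ) = (γ−γ₁)(\bar{γ₁}−γ₂)(\bar{γ₂}−γ₃)⋯(\bar{γ}_{N−1}−γ_N) ≠ 0. -/
open Polynomial

/-- Left evaluation of a quaternion polynomial: `f^{eℓ}(α) = Σ α^j f_j`. -/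
noncomputable def levalQ (α : Quaternion ℝ) (f : Polynomial (Quaternion ℝ)) : Quaternion ℝ :=
  f.sum fun j a => α ^ j * a


namespace LevalAux

variable (α : Quaternion ℝ)

lemma levalQ_add (f g : Polynomial (Quaternion ℝ)) :
    levalQ α (f + g) = levalQ α f + levalQ α g := by
  unfold levalQ
  exact Polynomial.sum_add_index f g _ (fun n => mul_zero _) (fun n a b => mul_add _ _ _)

lemma levalQ_monomial (n : ℕ) (a : Quaternion ℝ) :
    levalQ α (monomial n a) = α ^ n * a := by
  unfold levalQ
  exact Polynomial.sum_monomial_index a _ (mul_zero _)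

lemma levalQ_mul_X (f : Polynomial (Quaternion ℝ)) :
    levalQ α (f * X) = α * levalQ α f := by
  induction f using Polynomial.induction_on' with
  | add p q hp hq => rw [add_mul, levalQ_add, hp, hq, levalQ_add, mul_add]
  | monomial n a =>
      rw [monomial_mul_X, levalQ_monomial, levalQ_monomial, pow_succ', mul_assoc]

lemma levalQ_mul_C (f : Polynomial (Quaternion ℝ)) (c : Quaternion ℝ) :
    levalQ α (f * C c) = levalQ α f * c := by
  induction f using Polynomial.induction_on' with
  | add p q hp hq => rw [add_mul, levalQ_add, hp, hq, levalQ_add, add_mul]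
  | monomial n a =>
      rw [monomial_mul_C, levalQ_monomial, levalQ_monomial, mul_assoc]

lemma levalQ_lin (c : Quaternion ℝ) : levalQ α (X - C c) = α - c := by
  have : (X - C c : Polynomial (Quaternion ℝ)) = monomial 1 1 + monomial 0 (-c) := by
    simp [Polynomial.monomial_one_one_eq_X, sub_eq_add_neg]
  rw [this, levalQ_add, levalQ_monomial, levalQ_monomial]
  simp [sub_eq_add_neg]

lemma levalQ_mul_lin (f : Polynomial (Quaternion ℝ)) (c : Quaternion ℝ) :
    levalQ α (f * (X - C c)) = α * levalQ α f - levalQ α f * c := by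
  rw [mul_sub, sub_eq_add_neg, ← mul_neg, ← C_neg, levalQ_add, levalQ_mul_X,
    levalQ_mul_C, mul_neg, ← sub_eq_add_neg]

end LevalAux

lemma re_mul_comm (a b : Quaternion ℝ) : (a * b).re = (b * a).re := by
  rw [Quaternion.re_mul, Quaternion.re_mul]; ring

/-- Same conjugacy class data: equal real part and norm. -/
def Same (a b : Quaternion ℝ) : Prop := a.re = b.re ∧ Quaternion.normSq a = Quaternion.normSq b

lemma Same.refl (a : Quaternion ℝ) : Same a a := ⟨rfl, rfl⟩

lemma Same.trans {a b c : Quaternion ℝ} (h1 : Same a b) (h2 : Same b c) : Same a c :=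
  ⟨h1.1.trans h2.1, h1.2.trans h2.2⟩

lemma same_star (a : Quaternion ℝ) : Same (star a) a := by
  constructor
  · simp
  · simp [Quaternion.normSq_star]

lemma same_conj (h a : Quaternion ℝ) (hh : h ≠ 0) : Same (h⁻¹ * a * h) a := by
  constructor
  · rw [re_mul_comm, ← mul_assoc, mul_inv_cancel₀ hh, one_mul]
  · rw [map_mul, map_mul, map_inv₀, mul_comm, ← mul_assoc, mul_inv_cancel₀, one_mul]
    simpa [Quaternion.normSq_eq_zero] using hh

/-- Key identity: if `α ∼ β` then `(α − β) * star β = α * (α − β)`. -/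
lemma key_identity {a b : Quaternion ℝ} (hs : Same a b) :
    (a - b) * star b = a * (a - b) := by
  have h1 : star b = (↑(2 * b.re) : Quaternion ℝ) - b := by
    rw [← Quaternion.self_add_star' b]; abel
  have h2 : star a = (↑(2 * a.re) : Quaternion ℝ) - a := by
    rw [← Quaternion.self_add_star' a]; abel
  have hn : a * star a = b * star b := by
    rw [Quaternion.self_mul_star, Quaternion.self_mul_star, hs.2]
  have hre : (↑(2 * a.re) : Quaternion ℝ) = ↑(2 * b.re) := by rw [hs.1]
  rw [h1]
  have hn' : a * ((↑(2 * a.re) : Quaternion ℝ) - a) = b * ((↑(2 * b.re) : Quaternion ℝ) - b) := by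
    rw [← h2, ← h1, hn]
  calc (a - b) * ((↑(2 * b.re) : Quaternion ℝ) - b)
      = a * ((↑(2 * b.re) : Quaternion ℝ) - b) - b * ((↑(2 * b.re) : Quaternion ℝ) - b) := by
        noncomm_ring
    _ = a * ((↑(2 * b.re) : Quaternion ℝ) - b) - a * ((↑(2 * a.re) : Quaternion ℝ) - a) := by
        rw [hn']
    _ = a * (a - b) := by rw [hre]; noncomm_ring


/-- The product along a spherical chain has a unique left zero, with explicit nonzero
left evaluation at every other point of the conjugacy class. -/
theorem stmt6 (N : ℕ) (hN : 1 ≤ N) (γ : ℕ → Quaternion ℝ)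
    (hconj : ∀ i < N, ∀ j < N, ∃ h : Quaternion ℝ, h ≠ 0 ∧ γ i = h⁻¹ * γ j * h)
    (hchain : ∀ i, i + 1 < N → γ (i + 1) ≠ star (γ i)) :
    ∀ δ : Quaternion ℝ, (∃ h : Quaternion ℝ, h ≠ 0 ∧ δ = h⁻¹ * γ 0 * h) → δ ≠ γ 0 →
      levalQ δ (((List.range N).map fun i => X - C (γ i)).prod) =
        (δ - γ 0) * (((List.range (N - 1)).map fun j => star (γ j) - γ (j + 1)).prod) ∧
      levalQ δ (((List.range N).map fun i => X - C (γ i)).prod) ≠ 0 := by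
  intro δ ⟨h, hh, hδ⟩ hne
  have hδ0 : Same δ (γ 0) := hδ ▸ same_conj h (γ 0) hh
  have hsame : ∀ i < N, ∀ j < N, Same (γ i) (γ j) := by
    intro i hi j hj
    obtain ⟨g, hg, hij⟩ := hconj i hi j hj
    exact hij ▸ same_conj g (γ j) hg
  -- the key induction
  have claim : ∀ m, m + 1 ≤ N →
      levalQ δ (((List.range (m + 1)).map fun i => X - C (γ i)).prod) =
        (δ - γ 0) * (((List.range m).map fun j => star (γ j) - γ (j + 1)).prod) ∧
      (δ - γ 0) * (((List.range m).map fun j => star (γ j) - γ (j + 1)).prod) ≠ 0 ∧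
      δ * ((δ - γ 0) * (((List.range m).map fun j => star (γ j) - γ (j + 1)).prod)) =
        ((δ - γ 0) * (((List.range m).map fun j => star (γ j) - γ (j + 1)).prod)) * star (γ m) := by
    intro m
    induction m with
    | zero =>
        intro _
        have h1 : ((List.range (0 + 1)).map fun i => X - C (γ i)).prod = X - C (γ 0) := by
          simp [List.range_succ]
        refine ⟨?_, ?_, ?_⟩
        · rw [h1, LevalAux.levalQ_lin]
          simp
        · simp only [List.range_zero, List.map_nil, List.prod_nil, mul_one]
          exact sub_ne_zero.mpr hne
        · simp only [List.range_zero, List.map_nil, List.prod_nil, mul_one]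
          exact (key_identity hδ0).symm
    | succ m ih =>
        intro hm1
        have hmN : m + 1 ≤ N := Nat.le_of_succ_le hm1
        obtain ⟨hval, hne0, hcomm⟩ := ih hmN
        set a := (δ - γ 0) * (((List.range m).map fun j => star (γ j) - γ (j + 1)).prod) with ha
        have hPsucc : (((List.range (m + 2)).map fun i => X - C (γ i)).prod) =
            (((List.range (m + 1)).map fun i => X - C (γ i)).prod) * (X - C (γ (m + 1))) := by
          rw [List.range_succ, List.map_append, List.prod_append]; simp
        have hBsucc : (((List.range (m + 1)).map fun j => star (γ j) - γ (j + 1)).prod) =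
            (((List.range m).map fun j => star (γ j) - γ (j + 1)).prod) * (star (γ m) - γ (m + 1)) := by
          rw [List.range_succ, List.map_append, List.prod_append]; simp
        have hfac : star (γ m) - γ (m + 1) ≠ 0 :=
          sub_ne_zero.mpr fun hq => (hchain m hm1) hq.symm
        have hsamem : Same (star (γ m)) (γ (m + 1)) :=
          (same_star (γ m)).trans (hsame m (by omega) (m + 1) (by omega))
        have hval' : levalQ δ (((List.range (m + 2)).map fun i => X - C (γ i)).prod) =
            a * (star (γ m) - γ (m + 1)) := by
          rw [hPsucc, LevalAux.levalQ_mul_lin, hval, hcomm, mul_sub]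
        have hfold : (δ - γ 0) * (((List.range (m + 1)).map fun j => star (γ j) - γ (j + 1)).prod)
            = a * (star (γ m) - γ (m + 1)) := by
          rw [hBsucc, ← mul_assoc, ← ha]
        refine ⟨?_, ?_, ?_⟩
        · rw [hval', hfold]
        · rw [hfold]
          exact mul_ne_zero hne0 hfac
        · rw [hfold, ← mul_assoc, hcomm, mul_assoc, ← key_identity hsamem]
          exact (mul_assoc _ _ _).symm
  obtain ⟨hval, hne0, _⟩ := claim (N - 1) (by omega)
  rw [show N - 1 + 1 = N from by omega] at hval
  exact ⟨hval, fun h0 => hne0 (hval.symm.trans h0)⟩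
end

section
/- For any f ∈ ℍ[z], any γ ∈ [α] (α non-real): the right evaluation f^{er}(γ) equals (α−\bar{α})⁻¹[f^{eℓ}(α)γ − \bar{α} f^{eℓ}(α) + α f^{eℓ}(\bar{α}) − f^{eℓ}(\bar{α})γ]. -/
/-!
The quaternions `α`, `ᾱ` and every conjugate `γ = h⁻¹αh` are roots of one real quadratic
`X² - 2 Re(α) X + |α|²`. Hence for each `j` there are real `s, t`, independent of the root,
with `x ^ j = s x + t` for all three. Substituting, both sides of the identity become linear in
`s, t`, and they agree coefficientwise because `α` commutes with `ᾱ`.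
-/

open Polynomial

namespace Polynomial

theorem aeval_inv_mul_mul {R A : Type*} [CommSemiring R] [DivisionRing A] [Algebra R A]
    (p : R[X]) {h : A} (hh : h ≠ 0) (x : A) : aeval (h⁻¹ * x * h) p = h⁻¹ * aeval x p * h := by
  simp only [aeval_eq_sum_range, GroupWithZero.conj_pow₀ hh, Finset.mul_sum, Finset.sum_mul,
    mul_smul_comm, smul_mul_assoc]

variable {R A : Type*} [CommRing R] [Nontrivial R] [Ring A] [Algebra R A] {p : R[X]}

theorem pow_eq_coeff_modByMonic_of_aeval_eq_zero (hp : p.Monic) (hdeg : p.degree ≤ 2) (j : ℕ)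
    {x : A} (hx : aeval x p = 0) :
    x ^ j = (X ^ j %ₘ p).coeff 1 • x + algebraMap R A ((X ^ j %ₘ p).coeff 0) := by
  have hlin : (X ^ j %ₘ p).degree ≤ 1 :=
    Order.le_of_lt_succ ((degree_modByMonic_lt _ hp).trans_le hdeg)
  rw [← aeval_X_pow (R := R), ← aeval_modByMonic_eq_self_of_root hx,
    eq_X_add_C_of_degree_le_one hlin]
  simp [Algebra.smul_def]

theorem sub_mul_mul_pow_eq (hp : p.Monic) (hdeg : p.degree ≤ 2) {α β γ : A}
    (hα : aeval α p = 0) (hβ : aeval β p = 0) (hγ : aeval γ p = 0) (hαβ : Commute α β)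
    (a : A) (j : ℕ) :
    (α - β) * (a * γ ^ j) =
      α ^ j * a * γ - β * (α ^ j * a) + α * (β ^ j * a) - β ^ j * a * γ := by
  rw [pow_eq_coeff_modByMonic_of_aeval_eq_zero hp hdeg j hα,
    pow_eq_coeff_modByMonic_of_aeval_eq_zero hp hdeg j hβ,
    pow_eq_coeff_modByMonic_of_aeval_eq_zero hp hdeg j hγ]
  generalize (X ^ j %ₘ p).coeff 1 = s, (X ^ j %ₘ p).coeff 0 = t
  simp only [Algebra.algebraMap_eq_smul_one, add_mul, mul_add, sub_mul, smul_mul_assoc,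
    mul_smul_comm, one_mul, mul_one, ← mul_assoc, hαβ.eq]
  module

end Polynomial

namespace Quaternion

open scoped Quaternion

noncomputable def charpoly (a : ℍ[ℝ]) : ℝ[X] := X ^ 2 - C (2 * a.re) * X + C (normSq a)

theorem charpoly_monic (a : ℍ[ℝ]) : a.charpoly.Monic := by
  unfold charpoly; monicity!

theorem degree_charpoly_le (a : ℍ[ℝ]) : a.charpoly.degree ≤ 2 := by
  unfold charpoly; compute_degree

@[simp] theorem charpoly_star (a : ℍ[ℝ]) : (star a).charpoly = a.charpoly := by
  simp [charpoly, normSq_star]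

theorem aeval_charpoly_self (a : ℍ[ℝ]) : aeval a a.charpoly = 0 := by
  have h : a * a - ↑(2 * a.re) * a + ↑(normSq a) = 0 := by
    rw [← self_add_star', ← self_mul_star, add_mul, star_comm_self]
    abel
  simpa [charpoly, sq] using h

theorem sub_star_ne_zero {a : ℍ[ℝ]} (ha : a.im ≠ 0) : a - star a ≠ 0 := by
  intro h
  have hreal := star_eq_self.mp (sub_eq_zero.mp h).symm
  exact ha (by simpa using congrArg im hreal)

theorem sub_star_mul_eval_eq {α γ : ℍ[ℝ]} (hγ : aeval γ α.charpoly = 0) (f : ℍ[ℝ][X]) :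
    (α - star α) * f.eval γ = levalQ α f * γ - star α * levalQ α f + α * levalQ (star α) f
      - levalQ (star α) f * γ := by
  simp only [eval_eq_sum, levalQ, Polynomial.sum_def, Finset.mul_sum, Finset.sum_mul,
    ← Finset.sum_sub_distrib, ← Finset.sum_add_distrib]
  refine Finset.sum_congr rfl fun j _ => ?_
  refine sub_mul_mul_pow_eq α.charpoly_monic α.degree_charpoly_le α.aeval_charpoly_self ?_ hγ
    star_comm_self.symm _ j
  simpa using (star α).aeval_charpoly_self

end Quaternion

/-- Right evaluation on a conjugacy class in terms of two left evaluations.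
(`Polynomial.eval` is right evaluation: `f^{er}(α) = Σ f_j α^j`.) -/
theorem stmt9 (α : Quaternion ℝ) (hα : α.im ≠ 0) (f : Polynomial (Quaternion ℝ))
    (γ : Quaternion ℝ) (hγ : ∃ h : Quaternion ℝ, h ≠ 0 ∧ γ = h⁻¹ * α * h) :
    f.eval γ = (α - star α)⁻¹ *
      (levalQ α f * γ - star α * levalQ α f + α * levalQ (star α) f
        - levalQ (star α) f * γ) := by
  obtain ⟨h, hh, rfl⟩ := hγ
  have hroot : aeval (h⁻¹ * α * h) α.charpoly = 0 := by
    rw [aeval_inv_mul_mul _ hh, α.aeval_charpoly_self, mul_zero, zero_mul]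
  rw [← Quaternion.sub_star_mul_eval_eq hroot, inv_mul_cancel_left₀ (Quaternion.sub_star_ne_zero hα)]
end

section
/- For each quaternion α with |α| < 1, the formal power series k_α(z) = Σ_{k≥0} α^k z^k is the two-sided formal inverse of the polynomial 1 − zα in ℍ[[z]], and its left and right evaluations at any γ with |γ| < 1 are k_α^{eℓ}(γ) = Υ⁻¹·(1 − γ\bar{α}) and k_α^{er}(γ) = (1 − \bar{α}γ)·Υ⁻¹, where Υ = 1 − (α+\bar{α})γ + |α|²γ². Consequently k_α has no zeros in the open unit ball. -/
/-! Every quaternion `α` is a root of `x² − (α + ᾱ) x + |α|²`, whose coefficients are real and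
hence central. So multiplying `∑ γⁿ αⁿ` on the left by `Υ = 1 − (α + ᾱ) γ + |α|² γ²` telescopes
to `1 − γᾱ`; the right evaluation is the conjugate of the left one for `(ᾱ, γ̄)`. As `‖γᾱ‖ < 1`,
`1 − γᾱ` is nonzero, hence so are `Υ` and both evaluations. -/

open PowerSeries in
theorem PowerSeries.mk_pow_mul_one_sub_X_mul_C {R : Type*} [Ring R] (a : R) :
    (mk fun n => a ^ n) * (1 - X * C a) = 1 := by
  ext (_ | n)
  · simp
  · rw [mul_sub, mul_one, map_sub, (commute_X (C a)).symm.eq, ← mul_assoc]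
    simp [coeff_succ_mul_X, coeff_mul_C, pow_succ]

open PowerSeries in
theorem PowerSeries.one_sub_X_mul_C_mul_mk_pow {R : Type*} [Ring R] (a : R) :
    (1 - X * C a) * (mk fun n => a ^ n) = 1 := by
  ext (_ | n)
  · simp
  · rw [sub_mul, one_mul, map_sub, mul_assoc]
    simp [coeff_succ_X_mul, coeff_C_mul, ← pow_succ']

theorem mul_tsum_pow_mul_of_recurrence {A : Type*} [Ring A] [TopologicalSpace A]
    [IsTopologicalRing A] [T2Space A] {γ s p : A} (hs : Commute s γ) (hp : Commute p γ)
    {c : ℕ → A} (hc : Summable fun n => γ ^ n * c n)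
    (hrec : ∀ n, c (n + 2) - s * c (n + 1) + p * c n = 0) :
    (1 - s * γ + p * γ ^ 2) * ∑' n, γ ^ n * c n = c 0 + γ * (c 1 - s * c 0) := by
  set f : ℕ → A := fun n => γ ^ n * c n
  set S := ∑' n, f n
  have hS : HasSum f S := hc.hasSum
  have hterm : ∀ n, f (n + 2) - s * γ * f (n + 1) + p * γ ^ 2 * f n = 0 := fun n => by
    have hs' : s * γ * f (n + 1) = γ ^ (n + 2) * (s * c (n + 1)) := calc
      _ = s * γ ^ (n + 2) * c (n + 1) := by rw [pow_succ' γ (n + 1)]; simp only [f, mul_assoc]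
      _ = _ := by rw [(hs.pow_right _).eq, mul_assoc]
    have hp' : p * γ ^ 2 * f n = γ ^ (n + 2) * (p * c n) := calc
      _ = p * γ ^ (n + 2) * c n := by rw [add_comm n 2, pow_add]; simp only [f, mul_assoc]
      _ = _ := by rw [(hp.pow_right _).eq, mul_assoc]
    rw [hs', hp', ← mul_sub, ← mul_add, hrec, mul_zero]
  have hsum : HasSum (fun n => f (n + 2) - s * γ * f (n + 1) + p * γ ^ 2 * f n)
      ((S - ∑ i ∈ Finset.range 2, f i) - s * γ * (S - ∑ i ∈ Finset.range 1, f i)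
        + p * γ ^ 2 * S) :=
    (((hasSum_nat_add_iff' 2).mpr hS).sub (((hasSum_nat_add_iff' 1).mpr hS).mul_left _)).add
      (hS.mul_left _)
  have hzero := hsum.unique (by simpa only [hterm] using hasSum_zero)
  have hsγ : s * γ * c 0 = γ * (s * c 0) := by rw [hs.eq, mul_assoc]
  simp only [Finset.sum_range_succ, Finset.sum_range_zero, f, pow_zero, pow_one, one_mul,
    zero_add] at hzero
  rw [mul_sub, ← sub_eq_zero, ← hzero, ← hsγ]
  noncomm_ring

namespace Quaternion

theorem summable_pow_mul_pow {α γ : ℍ[ℝ]} (hα : ‖α‖ < 1) (hγ : ‖γ‖ < 1) :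
    Summable fun n => γ ^ n * α ^ n := by
  refine Summable.of_norm ?_
  simp only [norm_mul, norm_pow, ← mul_pow]
  exact summable_geometric_of_lt_one (by positivity)
    (mul_lt_one_of_nonneg_of_lt_one_left (norm_nonneg _) hγ hα.le)

theorem mul_tsum_pow_mul_pow {α γ : ℍ[ℝ]} (hα : ‖α‖ < 1) (hγ : ‖γ‖ < 1) :
    (1 - (α + star α) * γ + ((‖α‖ ^ 2 : ℝ) : ℍ[ℝ]) * γ ^ 2) * ∑' n, γ ^ n * α ^ n
      = 1 - γ * star α := by
  have hnorm : ((‖α‖ ^ 2 : ℝ) : ℍ[ℝ]) = star α * α := by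
    rw [star_mul_self, normSq_eq_norm_mul_self, sq]
  have hrec : ∀ n, α ^ (n + 2) - (α + star α) * α ^ (n + 1) + ((‖α‖ ^ 2 : ℝ) : ℍ[ℝ]) * α ^ n
      = 0 := fun n => by
    rw [hnorm, add_mul, pow_succ' α (n + 1), pow_succ' α n, mul_assoc (star α)]
    abel
  rw [mul_tsum_pow_mul_of_recurrence (by rw [self_add_star']; exact coe_commutes _ _)
    (coe_commutes _ _) (summable_pow_mul_pow hα hγ) hrec]
  noncomm_ring

theorem tsum_pow_mul_pow_mul {α γ : ℍ[ℝ]} (hα : ‖α‖ < 1) (hγ : ‖γ‖ < 1) :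
    (∑' n, α ^ n * γ ^ n) * (1 - (α + star α) * γ + ((‖α‖ ^ 2 : ℝ) : ℍ[ℝ]) * γ ^ 2)
      = 1 - star α * γ := by
  have h := congrArg star
    (mul_tsum_pow_mul_pow (α := star α) (γ := star γ) (by rwa [norm_star])
      (by rwa [norm_star]))
  rw [star_mul, tsum_star] at h
  convert h using 2
  · simp [star_pow]
  · simp only [star_sub, star_add, star_mul, star_one, star_star, star_pow, norm_star, star_coe]
    rw [self_add_star', coe_commutes, coe_commutes]
  · simp

end Quaternion

/-- The power series `k_α = Σ α^k z^k` (|α| < 1) is the two-sided formal inverse of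
`1 − zα`, its left/right evaluations on the unit ball are given by explicit formulas,
and it has no left or right zeros in the unit ball. -/
theorem stmt16 (α : Quaternion ℝ) (hα : ‖α‖ < 1) :
    ((PowerSeries.mk fun n => α ^ n) *
        (1 - PowerSeries.X * PowerSeries.C (R := Quaternion ℝ) α) = 1 ∧
      (1 - PowerSeries.X * PowerSeries.C (R := Quaternion ℝ) α) *
        (PowerSeries.mk fun n => α ^ n) = 1) ∧
    ∀ γ : Quaternion ℝ, ‖γ‖ < 1 →
      ((∑' n : ℕ, γ ^ n * α ^ n) =
          (1 - (α + star α) * γ + ((‖α‖ ^ 2 : ℝ) : Quaternion ℝ) * γ ^ 2)⁻¹ *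
            (1 - γ * star α)) ∧
      ((∑' n : ℕ, α ^ n * γ ^ n) =
          (1 - star α * γ) *
            (1 - (α + star α) * γ + ((‖α‖ ^ 2 : ℝ) : Quaternion ℝ) * γ ^ 2)⁻¹) ∧
      (∑' n : ℕ, γ ^ n * α ^ n) ≠ 0 ∧ (∑' n : ℕ, α ^ n * γ ^ n) ≠ 0 := by
  refine ⟨⟨PowerSeries.mk_pow_mul_one_sub_X_mul_C α, PowerSeries.one_sub_X_mul_C_mul_mk_pow α⟩,
    fun γ hγ => ?_⟩
  have hL := Quaternion.mul_tsum_pow_mul_pow hα hγ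
  have hR := Quaternion.tsum_pow_mul_pow_mul hα hγ
  have hγα : ‖γ * star α‖ < 1 := by
    rw [norm_mul, Quaternion.norm_star]
    exact mul_lt_one_of_nonneg_of_lt_one_left (norm_nonneg _) hγ hα.le
  have hαγ : ‖star α * γ‖ < 1 := by rwa [norm_mul, mul_comm, ← norm_mul]
  have hL0 : 1 - γ * star α ≠ 0 := (Units.oneSub _ hγα).ne_zero
  have hR0 : 1 - star α * γ ≠ 0 := (Units.oneSub _ hαγ).ne_zero
  rw [← hL] at hL0
  rw [← hR] at hR0
  have hΥ := left_ne_zero_of_mul hL0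
  exact ⟨(eq_inv_mul_iff_mul_eq₀ hΥ).2 hL, (eq_mul_inv_iff_mul_eq₀ hΥ).2 hR,
    right_ne_zero_of_mul hL0, left_ne_zero_of_mul hR0⟩
end

section
/- For every quaternion α with |α| < 1, the Blaschke factor b_α(z) = (z−α)·Σ_{k≥0} \bar{α}^k z^k is a bi-inner power series: for every h ∈ H² (power series with square-summable quaternion coefficients), ‖b_α · h‖_{H²} = ‖h‖_{H²} = ‖h · b_α‖_{H²}. -/
/-!
Write `p = z · k_ᾱ · h`, so that `p₀ = 0` and `h_n = p_{n+1} - ᾱ p_n`; then `b_α · h = (z - α) k_ᾱ h`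
has coefficients `p_n - α p_{n+1}`. The quaternionic identity
`‖u - a v‖² - ‖v - ā u‖² = (1 - |a|²)(‖u‖² - ‖v‖²)` turns `‖(b_α h)_n‖² - ‖h_n‖²` into
`(1 - |α|²)(‖p_n‖² - ‖p_{n+1}‖²)`, which telescopes; the boundary term `‖p_N‖²` converges and
`‖p_{n+1}‖ ≤ |α| ‖p_n‖ + ‖h_n‖` forces its limit to vanish. Right multiplication is the conjugate
of left multiplication by `b_ᾱ`.
-/

open Filter Finset Topology
open scoped Quaternion

theorem eq_zero_of_tendsto_of_le_mul_add {u e : ℕ → ℝ} {r l : ℝ} (hr : r < 1)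
    (hu0 : ∀ n, 0 ≤ u n) (hu : Tendsto u atTop (𝓝 l)) (he : Tendsto e atTop (𝓝 0))
    (hrec : ∀ n, u (n + 1) ≤ r * u n + e n) : l = 0 := by
  have hl : 0 ≤ l := ge_of_tendsto' hu hu0
  have hle : l ≤ r * l + 0 :=
    le_of_tendsto_of_tendsto' (hu.comp (tendsto_add_atTop_nat 1)) ((hu.const_mul r).add he) hrec
  nlinarith

theorem hasSum_norm_sq_of_telescoping {E : Type*} [SeminormedAddCommGroup E] {c h p : ℕ → E}
    {κ r s : ℝ} (hκ : 0 < κ) (hr : r < 1) (hh : HasSum (fun n => ‖h n‖ ^ 2) s) (hp0 : p 0 = 0)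
    (hp : ∀ n, ‖p (n + 1)‖ ≤ r * ‖p n‖ + ‖h n‖)
    (hc : ∀ n, ‖c n‖ ^ 2 = ‖h n‖ ^ 2 + κ * (‖p n‖ ^ 2 - ‖p (n + 1)‖ ^ 2)) :
    HasSum (fun n => ‖c n‖ ^ 2) s := by
  have hpartial : ∀ N, ∑ n ∈ range N, ‖c n‖ ^ 2 = ∑ n ∈ range N, ‖h n‖ ^ 2 - κ * ‖p N‖ ^ 2 := by
    intro N
    simp only [hc, sum_add_distrib, ← mul_sum, sum_range_sub' (fun n => ‖p n‖ ^ 2), hp0,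
      norm_zero]
    ring
  have hcs : Summable fun n => ‖c n‖ ^ 2 := by
    refine summable_of_sum_range_le (c := s) (fun n => by positivity) fun N => ?_
    have := sum_le_hasSum (range N) (fun n _ => by positivity) hh
    rw [hpartial]
    nlinarith
  have hp_sq : Tendsto (fun N => ‖p N‖ ^ 2) atTop (𝓝 ((s - ∑' n, ‖c n‖ ^ 2) / κ)) := by
    refine ((hh.tendsto_sum_nat.sub hcs.hasSum.tendsto_sum_nat).div_const κ).congr fun N => ?_
    rw [hpartial]
    field_simp
    ring
  have hp_norm := hp_sq.sqrt
  simp only [Real.sqrt_sq (norm_nonneg _)] at hp_norm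
  have hh0 : Tendsto (fun n => ‖h n‖) atTop (𝓝 0) := by
    simpa [Real.sqrt_sq (norm_nonneg _)] using hh.summable.tendsto_atTop_zero.sqrt
  rw [eq_zero_of_tendsto_of_le_mul_add hr (fun n => norm_nonneg _) hp_norm hh0 hp] at hp_norm
  rw [hasSum_iff_tendsto_nat_of_nonneg (fun n => by positivity)]
  simpa [hpartial] using hh.tendsto_sum_nat.sub ((hp_norm.pow 2).const_mul κ)

namespace Quaternion

theorem norm_sub_mul_sq_sub_norm_sub_star_mul_sq (a u v : ℍ[ℝ]) :
    ‖u - a * v‖ ^ 2 - ‖v - star a * u‖ ^ 2 = (1 - ‖a‖ ^ 2) * (‖u‖ ^ 2 - ‖v‖ ^ 2) := by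
  simp only [sq, ← normSq_eq_norm_mul_self, normSq_def', re_mul, imI_mul, imJ_mul, imK_mul,
    re_sub, imI_sub, imJ_sub, imK_sub, re_star, imI_star, imJ_star, imK_star]
  ring

theorem coe_one_sub_norm_sq (a : ℍ[ℝ]) : ((1 - ‖a‖ ^ 2 : ℝ) : ℍ[ℝ]) = 1 - a * star a := by
  rw [self_mul_star, normSq_eq_norm_mul_self, sq]
  push_cast
  rfl

end Quaternion

section Convolution

variable {R : Type*}

def cauchyCoeff [Semiring R] (f g : ℕ → R) (n : ℕ) : R :=
  ∑ j ∈ range (n + 1), f j * g (n - j)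

theorem star_cauchyCoeff [Semiring R] [StarRing R] (f g : ℕ → R) (n : ℕ) :
    star (cauchyCoeff f g n) = cauchyCoeff (fun j => star (g j)) (fun j => star (f j)) n := by
  rw [cauchyCoeff, star_sum, ← sum_range_reflect]
  refine sum_congr rfl fun j hj => ?_
  rw [star_mul, Nat.add_sub_cancel, Nat.sub_sub_self (mem_range_succ_iff.mp hj)]

/-- The coefficients of `z · k_β · h`, where `k_β = Σ β^k z^k` is the Szegő kernel. -/
def kernelConv [Semiring R] (β : R) (h : ℕ → R) : ℕ → R
  | 0 => 0
  | n + 1 => β * kernelConv β h n + h n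

theorem sum_range_pow_mul_eq_kernelConv [Semiring R] (β : R) (h : ℕ → R) (n : ℕ) :
    ∑ j ∈ range n, β ^ j * h (n - (j + 1)) = kernelConv β h n := by
  induction n with
  | zero => rfl
  | succ n ih =>
    rw [sum_range_succ', kernelConv, ← ih, mul_sum]
    simp only [pow_succ', mul_assoc, Nat.add_sub_add_right, pow_zero, one_mul, Nat.add_sub_cancel]

end Convolution

noncomputable def blaschkeCoeff (α : ℍ[ℝ]) (k : ℕ) : ℍ[ℝ] :=
  if k = 0 then -α else ((1 - ‖α‖ ^ 2 : ℝ) : ℍ[ℝ]) * (star α) ^ (k - 1)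

theorem star_blaschkeCoeff (α : ℍ[ℝ]) (k : ℕ) :
    star (blaschkeCoeff α k) = blaschkeCoeff (star α) k := by
  cases k with
  | zero => simp [blaschkeCoeff]
  | succ k =>
    simp only [blaschkeCoeff, Nat.succ_ne_zero, if_false, star_mul, star_pow, star_star,
      Quaternion.star_coe, norm_star, ← Quaternion.coe_commutes]

theorem cauchyCoeff_blaschkeCoeff (α : ℍ[ℝ]) (h : ℕ → ℍ[ℝ]) (n : ℕ) :
    cauchyCoeff (blaschkeCoeff α) h n
      = kernelConv (star α) h n - α * kernelConv (star α) h (n + 1) := by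
  have hsum : cauchyCoeff (blaschkeCoeff α) h n
      = ((1 - ‖α‖ ^ 2 : ℝ) : ℍ[ℝ]) * kernelConv (star α) h n - α * h n := by
    rw [cauchyCoeff, sum_range_succ', ← sum_range_pow_mul_eq_kernelConv, mul_sum]
    simp [blaschkeCoeff, mul_assoc, sub_eq_add_neg]
  rw [hsum, Quaternion.coe_one_sub_norm_sq, kernelConv]
  noncomm_ring

theorem hasSum_norm_sq_cauchyCoeff_blaschkeCoeff {α : ℍ[ℝ]} (hα : ‖α‖ < 1) {h : ℕ → ℍ[ℝ]}
    {s : ℝ} (hh : HasSum (fun n => ‖h n‖ ^ 2) s) :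
    HasSum (fun n => ‖cauchyCoeff (blaschkeCoeff α) h n‖ ^ 2) s := by
  refine hasSum_norm_sq_of_telescoping (p := kernelConv (star α) h) (κ := 1 - ‖α‖ ^ 2)
    (by nlinarith [norm_nonneg α]) hα hh rfl (fun n => ?_) (fun n => ?_)
  · calc ‖star α * kernelConv (star α) h n + h n‖
        ≤ ‖star α * kernelConv (star α) h n‖ + ‖h n‖ := norm_add_le _ _
      _ = ‖α‖ * ‖kernelConv (star α) h n‖ + ‖h n‖ := by rw [norm_mul, norm_star]
  · have hkey := Quaternion.norm_sub_mul_sq_sub_norm_sub_star_mul_sq α (kernelConv (star α) h n)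
      (kernelConv (star α) h (n + 1))
    have hstep : kernelConv (star α) h (n + 1) - star α * kernelConv (star α) h n = h n :=
      add_sub_cancel_left _ _
    rw [← cauchyCoeff_blaschkeCoeff, hstep] at hkey
    linarith

theorem hasSum_norm_sq_cauchyCoeff_blaschkeCoeff_right {α : ℍ[ℝ]} (hα : ‖α‖ < 1)
    {h : ℕ → ℍ[ℝ]} {s : ℝ} (hh : HasSum (fun n => ‖h n‖ ^ 2) s) :
    HasSum (fun n => ‖cauchyCoeff h (blaschkeCoeff α) n‖ ^ 2) s := by
  have := hasSum_norm_sq_cauchyCoeff_blaschkeCoeff (α := star α) (h := fun n => star (h n))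
    (by rwa [norm_star]) (by simpa only [norm_star] using hh)
  simpa only [← norm_star (cauchyCoeff h _ _), star_cauchyCoeff, star_blaschkeCoeff] using this

/-- The Blaschke factor `b_α(z) = (z−α)·Σ ᾱ^k z^k` (|α| < 1), whose coefficient
sequence is `b₀ = −α`, `b_k = (1−|α|²) ᾱ^{k−1}` for `k ≥ 1`, is bi-inner: left and
right multiplication by it preserves the H² norm. -/
theorem stmt17 (α : Quaternion ℝ) (hα : ‖α‖ < 1) (h : ℕ → Quaternion ℝ)
    (hh : Summable fun j => ‖h j‖ ^ 2) :
    let b : ℕ → Quaternion ℝ := fun k =>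
      if k = 0 then -α else ((1 - ‖α‖ ^ 2 : ℝ) : Quaternion ℝ) * (star α) ^ (k - 1)
    let bh : ℕ → Quaternion ℝ := fun n => ∑ j ∈ Finset.range (n + 1), b j * h (n - j)
    let hb : ℕ → Quaternion ℝ := fun n => ∑ j ∈ Finset.range (n + 1), h j * b (n - j)
    (Summable fun n => ‖bh n‖ ^ 2) ∧ (Summable fun n => ‖hb n‖ ^ 2) ∧
    (∑' n, ‖bh n‖ ^ 2) = (∑' n, ‖h n‖ ^ 2) ∧
    (∑' n, ‖hb n‖ ^ 2) = (∑' n, ‖h n‖ ^ 2) := by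
  have hleft := hasSum_norm_sq_cauchyCoeff_blaschkeCoeff hα hh.hasSum
  have hright := hasSum_norm_sq_cauchyCoeff_blaschkeCoeff_right hα hh.hasSum
  exact ⟨hleft.summable, hright.summable, hleft.tsum_eq, hright.tsum_eq⟩
end

section
/- Let V be a non-real conjugacy class and let g = (z−α₁)⋯(z−α_n) and h = (z−β₁)⋯(z−β_k) with n ≥ k, where (α₁,…,α_n) and (β₁,…,β_k) are spherical chains in V. If α₁ ≠ β₁ (g and h left coprime), then the least right common multiple of g and h equals 𝒳_V^k if n = k, and equals 𝒳_V^k · (z−α₁)(z−α₂)⋯(z−α_{n−k}) if n > k. -/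
/-!
If `a ≠ b` lie on the same sphere `V`, then `(X - a) p = (X - b) q` forces
`p = (X - ā) t` and `q = (X - b̄) t` with `t = (a - b)⁻¹ (p - q)`, because conjugation by `a - b`
sends `a` to `b̄` (both are roots of the central polynomial `𝒳_V`). Applied to the first factors of
the two chains this splits off one factor `(X - α₁)(X - ᾱ₁) = 𝒳_V` from a common right multiple
and leaves `X - ᾱ₁` in front of the shortened chains; the chain condition `α₂ ≠ ᾱ₁` lets
`X - ᾱ₁` pass through the rest of each chain, so what remains is a common right multiple of the
chains shortened by one, and induction on `k` concludes. Conversely every chain of length `j` in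
`V` left-divides the central `𝒳_V ^ j`.
-/

open Polynomial
open scoped Quaternion

/-- For `s > |r|` this is the conjugacy class `V` of the paper. -/
def quatSphere (r s : ℝ) : Set ℍ[ℝ] := {a | a.re = r ∧ ‖a‖ = s}

/-- `𝒳_V` of the paper. -/
noncomputable def sphereCharPoly (r s : ℝ) : ℍ[ℝ][X] :=
  X ^ 2 - C ((2 * r : ℝ) : ℍ[ℝ]) * X + C ((s ^ 2 : ℝ) : ℍ[ℝ])

noncomputable def linearProd (γ : ℕ → ℍ[ℝ]) (m : ℕ) : ℍ[ℝ][X] :=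
  ((List.range m).map fun i => X - C (γ i)).prod

def IsSphericalChain (r s : ℝ) (γ : ℕ → ℍ[ℝ]) (n : ℕ) : Prop :=
  (∀ i < n, γ i ∈ quatSphere r s) ∧ ∀ i, i + 1 < n → γ (i + 1) ≠ star (γ i)

theorem star_mem_quatSphere {r s : ℝ} {a : ℍ[ℝ]} (ha : a ∈ quatSphere r s) :
    star a ∈ quatSphere r s := by
  simpa [quatSphere] using ha

theorem semiconjBy_sub_star {r s : ℝ} {a b : ℍ[ℝ]} (ha : a ∈ quatSphere r s)
    (hb : b ∈ quatSphere r s) : SemiconjBy (a - b) (star b) a := by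
  have hadd : a + star a = b + star b := by
    simp [Quaternion.self_add_star, ha.1, hb.1]
  have hnormSq : Quaternion.normSq a = Quaternion.normSq b := by
    simp only [Quaternion.normSq_eq_norm_mul_self, ha.2, hb.2]
  have : (a - b) * star b - a * (a - b)
      = a * (b + star b) - a * (a + star a) + (a * star a - b * star b) := by
    noncomm_ring
  rw [SemiconjBy, ← sub_eq_zero, this, hadd, Quaternion.self_mul_star, Quaternion.self_mul_star,
    hnormSq]
  simp

theorem C_mul_X_sub_C_of_semiconjBy {R : Type*} [Ring R] {c x y : R} (h : SemiconjBy c x y) :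
    C c * (X - C x) = (X - C y) * C c := by
  rw [mul_sub, sub_mul, ← C_mul, h.eq, C_mul, (commute_X (C c)).eq]

theorem X_sub_C_mul_X_sub_C_star {r s : ℝ} {a : ℍ[ℝ]} (ha : a ∈ quatSphere r s) :
    (X - C a) * (X - C (star a)) = sphereCharPoly r s := by
  have hmul : a * star a = ((s ^ 2 : ℝ) : ℍ[ℝ]) := by
    rw [Quaternion.self_mul_star, Quaternion.normSq_eq_norm_mul_self, ha.2, sq]
  have hadd : a + star a = ((2 * r : ℝ) : ℍ[ℝ]) := by
    rw [Quaternion.self_add_star', ha.1]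
  rw [sphereCharPoly, ← hmul, ← hadd, C_mul, C_add, sub_mul, mul_sub, mul_sub, X_mul_C]
  noncomm_ring

theorem sphereCharPoly_commute (r s : ℝ) (p : ℍ[ℝ][X]) : Commute (sphereCharPoly r s) p := by
  have hreal : ∀ x : ℝ, Commute (C (x : ℍ[ℝ])) p := fun x => by
    simpa [Polynomial.algebraMap_apply] using Algebra.commute_algebraMap_left (R := ℝ) x p
  exact (((commute_X p).pow_left 2).sub_left ((hreal _).mul_left (commute_X p))).add_left
    (hreal _)

theorem exists_eq_of_X_sub_C_mul_eq {r s : ℝ} {a b : ℍ[ℝ]} (ha : a ∈ quatSphere r s)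
    (hb : b ∈ quatSphere r s) (hab : a ≠ b) {p q : ℍ[ℝ][X]}
    (h : (X - C a) * p = (X - C b) * q) :
    ∃ t, p = (X - C (star a)) * t ∧ q = (X - C (star b)) * t := by
  have hd : a - b ≠ 0 := sub_ne_zero.mpr hab
  have hbd : SemiconjBy (a - b) (star a) b := by
    rw [← neg_sub b a, SemiconjBy.neg_left_iff]
    exact semiconjBy_sub_star hb ha
  have hp : C (a - b) * p = (X - C b) * (p - q) := by
    rw [mul_sub, ← h, ← sub_mul, sub_sub_sub_cancel_left, ← C_sub]
  have hq : C (a - b) * q = (X - C a) * (p - q) := by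
    rw [mul_sub, h, ← sub_mul, sub_sub_sub_cancel_left, ← C_sub]
  have hsolve : ∀ {x y : ℍ[ℝ]} {f : ℍ[ℝ][X]}, SemiconjBy (a - b) y x →
      C (a - b) * f = (X - C x) * (p - q) → f = (X - C y) * (C (a - b)⁻¹ * (p - q)) :=
    fun hxy hf => by
      rw [← mul_assoc, ← C_mul_X_sub_C_of_semiconjBy hxy.inv_symm_left₀, mul_assoc, ← hf,
        ← mul_assoc, ← C_mul, inv_mul_cancel₀ hd, C_1, one_mul]
  exact ⟨_, hsolve hbd hp, hsolve (semiconjBy_sub_star ha hb) hq⟩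

theorem linearProd_zero (γ : ℕ → ℍ[ℝ]) : linearProd γ 0 = 1 := by
  simp [linearProd]

theorem linearProd_succ (γ : ℕ → ℍ[ℝ]) (m : ℕ) :
    linearProd γ (m + 1) = linearProd γ m * (X - C (γ m)) := by
  simp [linearProd, List.range_succ]

theorem linearProd_succ' (γ : ℕ → ℍ[ℝ]) (m : ℕ) :
    linearProd γ (m + 1) = (X - C (γ 0)) * linearProd (fun i => γ (i + 1)) m := by
  simp [linearProd, List.range_succ_eq_map, List.map_map, Function.comp_def]

theorem linearProd_add (γ : ℕ → ℍ[ℝ]) (m j : ℕ) :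
    linearProd γ (m + j) = linearProd γ m * linearProd (fun i => γ (m + i)) j := by
  simp [linearProd, List.range_add, List.map_map, Function.comp_def]

namespace IsSphericalChain

variable {r s : ℝ} {γ : ℕ → ℍ[ℝ]} {n : ℕ}

theorem tail (h : IsSphericalChain r s γ (n + 1)) :
    IsSphericalChain r s (fun i => γ (i + 1)) n :=
  ⟨fun i hi => h.1 (i + 1) (by omega), fun i hi => h.2 (i + 1) (by omega)⟩

theorem mono (h : IsSphericalChain r s γ n) {m : ℕ} (hmn : m ≤ n) : IsSphericalChain r s γ m :=
  ⟨fun i hi => h.1 i (by omega), fun i hi => h.2 i (by omega)⟩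

end IsSphericalChain

theorem linearProd_dvd_sphereCharPoly_pow {r s : ℝ} {γ : ℕ → ℍ[ℝ]} :
    ∀ {j : ℕ}, (∀ i < j, γ i ∈ quatSphere r s) → linearProd γ j ∣ sphereCharPoly r s ^ j
  | 0, _ => by simp [linearProd_zero]
  | j + 1, hγ => by
    obtain ⟨t, ht⟩ := linearProd_dvd_sphereCharPoly_pow (j := j) fun i hi => hγ i (by omega)
    refine ⟨(X - C (star (γ j))) * t, ?_⟩
    rw [pow_succ, ht, mul_assoc, (sphereCharPoly_commute r s t).symm.eq,
      ← X_sub_C_mul_X_sub_C_star (hγ j (by omega)), linearProd_succ]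
    noncomm_ring

theorem linearProd_dvd_sphereCharPoly_pow_mul {r s : ℝ} {γ : ℕ → ℍ[ℝ]} {n k : ℕ}
    (hγ : ∀ i < n, γ i ∈ quatSphere r s) (hkn : k ≤ n) :
    linearProd γ n ∣ sphereCharPoly r s ^ k * linearProd γ (n - k) := by
  obtain ⟨m, rfl⟩ := Nat.exists_eq_add_of_le' hkn
  rw [Nat.add_sub_cancel, ((sphereCharPoly_commute r s _).pow_left k).eq, linearProd_add]
  exact mul_dvd_mul_left _ (linearProd_dvd_sphereCharPoly_pow fun i hi => hγ _ (by omega))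

theorem linearProd_dvd_of_dvd_X_sub_C_star_mul {r s : ℝ} :
    ∀ {m : ℕ} {γ : ℕ → ℍ[ℝ]} {t : ℍ[ℝ][X]}, IsSphericalChain r s γ (m + 1) →
      linearProd (fun i => γ (i + 1)) m ∣ (X - C (star (γ 0))) * t → linearProd γ m ∣ t
  | 0, _, _, _, _ => by simp [linearProd_zero]
  | m + 1, γ, t, hγ, ⟨u, hu⟩ => by
    rw [linearProd_succ', mul_assoc] at hu
    obtain ⟨t', ht, hu'⟩ := exists_eq_of_X_sub_C_mul_eq (star_mem_quatSphere (hγ.1 0 (by omega)))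
      (hγ.1 1 (by omega)) (hγ.2 0 (by omega)).symm hu
    rw [star_star] at ht
    have ih := linearProd_dvd_of_dvd_X_sub_C_star_mul hγ.tail ⟨u, hu'.symm⟩
    rw [ht, linearProd_succ']
    exact mul_dvd_mul_left _ ih

theorem sphereCharPoly_pow_mul_linearProd_dvd {r s : ℝ} :
    ∀ {k n : ℕ} {α β : ℕ → ℍ[ℝ]} {q : ℍ[ℝ][X]}, IsSphericalChain r s α n →
      IsSphericalChain r s β k → k ≤ n → α 0 ≠ β 0 → linearProd α n ∣ q →
      linearProd β k ∣ q → sphereCharPoly r s ^ k * linearProd α (n - k) ∣ q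
  | 0, n, α, β, q, _, _, _, _, hαq, _ => by simpa using hαq
  | k + 1, m + 1, α, β, q, hα, hβ, hkn, hne, ⟨u, hu⟩, ⟨v, hv⟩ => by
    rw [linearProd_succ', mul_assoc] at hu hv
    have hα0 := hα.1 0 (by omega)
    obtain ⟨t, htα, htβ⟩ :=
      exists_eq_of_X_sub_C_mul_eq hα0 (hβ.1 0 (by omega)) hne (hu.symm.trans hv)
    have hq : q = sphereCharPoly r s * t := by
      rw [hu, htα, ← mul_assoc, X_sub_C_mul_X_sub_C_star hα0]
    have ih := sphereCharPoly_pow_mul_linearProd_dvd (hα.mono (by omega)) (hβ.mono (by omega))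
      (by omega) hne (linearProd_dvd_of_dvd_X_sub_C_star_mul hα ⟨u, htα.symm⟩)
      (linearProd_dvd_of_dvd_X_sub_C_star_mul hβ ⟨v, htβ.symm⟩)
    rw [hq, Nat.add_sub_add_right, pow_succ', mul_assoc]
    exact mul_dvd_mul_left _ ih

theorem stmt18_general (n k : ℕ) (hnk : k ≤ n) (αs βs : ℕ → Quaternion ℝ)
    (hαV : ∀ i < n, (αs i).re = (αs 0).re ∧ ‖αs i‖ = ‖αs 0‖)
    (hβV : ∀ i < k, (βs i).re = (αs 0).re ∧ ‖βs i‖ = ‖αs 0‖)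
    (hαchain : ∀ i, i + 1 < n → αs (i + 1) ≠ star (αs i))
    (hβchain : ∀ i, i + 1 < k → βs (i + 1) ≠ star (βs i))
    (hcop : αs 0 ≠ βs 0) :
    ∀ q : Polynomial (Quaternion ℝ),
      ((∃ u, q = (((List.range n).map fun i => X - C (αs i)).prod) * u) ∧
        (∃ u, q = (((List.range k).map fun i => X - C (βs i)).prod) * u)) ↔
      ∃ u, q = (X ^ 2 - C ((2 * (αs 0).re : ℝ) : Quaternion ℝ) * X
            + C ((‖αs 0‖ ^ 2 : ℝ) : Quaternion ℝ)) ^ k *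
          (((List.range (n - k)).map fun i => X - C (αs i)).prod) * u := by
  intro q
  -- `a ∣ b` in a noncommutative monoid means `∃ c, b = a * c`: right-ideal membership.
  change linearProd αs n ∣ q ∧ linearProd βs k ∣ q ↔
    sphereCharPoly (αs 0).re ‖αs 0‖ ^ k * linearProd αs (n - k) ∣ q
  refine ⟨fun ⟨hαq, hβq⟩ => ?_, fun h => ⟨?_, ?_⟩⟩
  · exact sphereCharPoly_pow_mul_linearProd_dvd ⟨hαV, hαchain⟩ ⟨hβV, hβchain⟩ hnk hcop hαq hβq
  · exact (linearProd_dvd_sphereCharPoly_pow_mul hαV hnk).trans h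
  · exact ((linearProd_dvd_sphereCharPoly_pow hβV).mul_right _).trans h

/-- Least right common multiple of two left-coprime indecomposable polynomials
`g = (z−α₁)⋯(z−α_n)` and `h = (z−β₁)⋯(z−β_k)` (spherical chains in the same non-real
conjugacy class, `n ≥ k`, `α₁ ≠ β₁`): the right ideal `⟨g⟩ᵣ ∩ ⟨h⟩ᵣ` is generated by
`𝒳_V^k (z−α₁)⋯(z−α_{n−k})` (which is `𝒳_V^k` when `n = k`). -/
theorem stmt18 (n k : ℕ) (hk : 1 ≤ k) (hnk : k ≤ n) (αs βs : ℕ → Quaternion ℝ)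
    (hα0 : (αs 0).im ≠ 0)
    (hαV : ∀ i < n, (αs i).re = (αs 0).re ∧ ‖αs i‖ = ‖αs 0‖)
    (hβV : ∀ i < k, (βs i).re = (αs 0).re ∧ ‖βs i‖ = ‖αs 0‖)
    (hαchain : ∀ i, i + 1 < n → αs (i + 1) ≠ star (αs i))
    (hβchain : ∀ i, i + 1 < k → βs (i + 1) ≠ star (βs i))
    (hcop : αs 0 ≠ βs 0) :
    ∀ q : Polynomial (Quaternion ℝ),
      ((∃ u, q = (((List.range n).map fun i => X - C (αs i)).prod) * u) ∧
        (∃ u, q = (((List.range k).map fun i => X - C (βs i)).prod) * u)) ↔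
      ∃ u, q = (X ^ 2 - C ((2 * (αs 0).re : ℝ) : Quaternion ℝ) * X
            + C ((‖αs 0‖ ^ 2 : ℝ) : Quaternion ℝ)) ^ k *
          (((List.range (n - k)).map fun i => X - C (αs i)).prod) * u :=
  stmt18_general n k hnk αs βs hαV hβV hαchain hβchain hcop
end
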